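/- Let α ∈ B₃ be a summit element with summit exponent u such that δ^{-u}·α ≠ 1 and π(α) is a 3-cycle. Then there exists a nondecreasing word w whose last two letters both equal 1 such that α is conjugate to δᵘ·∏w; in other words, α is conjugate to δᵘ·P·a₁² where P·a₁² is a nondecreasing positive word. -/

import Mathlib

/-!
Write `δ^{-u} α` as a positive word `w`. Conjugating `δ^u · P · Q` by `Q` gives
`δ^u · τ^u(Q) · P`, so the words obtained from `w` by cyclic rotation (with a shift of the letters)
and by adding a constant to all letters all represent conjugates of `α` with the same exponent `u`.
Maximality of `u` forbids any factor `a_{i+1} a_i = δ` in these words, so each of them is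
nondecreasing. If `w` has a repeated letter `c c`, rotating it to the end and shifting `c` to `1`
gives the claim. Otherwise `w` is strictly ascending, of even length `2m` because `π(α)` is even.
Rotating its last letter to the front either creates a repeated letter, or keeps the word
ascending, which forces `u + 2m ≡ 0 (mod 3)`; but then `π(α) = π(δ)^{u-m} = 1`, not a 3-cycle.
-/

namespace Braid

/-- Relations of the dual (band-generator) presentation of the 3-braid group:
`a (i+1) * a i = a (i+2) * a (i+1)` for all `i : ZMod 3`. -/
def braidRels : Set (FreeGroup (ZMod 3)) :=
  { r | ∃ i : ZMod 3,
      r = FreeGroup.of (i + 1) * FreeGroup.of i *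
          (FreeGroup.of (i + 2) * FreeGroup.of (i + 1))⁻¹ }

/-- The 3-braid group with the band-generator presentation. -/
abbrev B3 := PresentedGroup braidRels

/-- The band generators `a i`, `i : ZMod 3`. -/
def a (i : ZMod 3) : B3 := PresentedGroup.of i

/-- The fundamental element `δ = a₂ * a₁`. -/
def δ : B3 := a 2 * a 1

/-- The submonoid of positive braids. -/
def Pos : Submonoid B3 := Submonoid.closure (Set.range a)

/-- The exponent-sum homomorphism, sending each generator to `1 : ℤ`. -/
def eHom : B3 →* Multiplicative ℤ :=
  PresentedGroup.toGroup (f := fun _ => Multiplicative.ofAdd (1 : ℤ)) (by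
    rintro r ⟨i, rfl⟩
    simp only [map_mul, map_inv, FreeGroup.lift_apply_of]
    group)

/-- The exponent sum (letter length on positive braids) as an integer. -/
def elen (x : B3) : ℤ := Multiplicative.toAdd (eHom x)

/-- The right complement `X* = X⁻¹ * δ^{e(X)}`. -/
def rc (X : B3) : B3 := X⁻¹ * δ ^ elen X

/-- The `n`-th power of the rotation automorphism `τ`: `τ^n (x) = δ^{-n} * x * δ^n`. -/
def tauPow (n : ℤ) (x : B3) : B3 := δ ^ (-n) * x * δ ^ n

/-- The positive braid represented by a list of generator indices. -/
def wordProd (l : List (ZMod 3)) : B3 := (l.map a).prod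

/-- A word is nondecreasing if each letter index is the previous one or the previous one
plus `1` (mod 3). -/
def NDWord (l : List (ZMod 3)) : Prop :=
  l.Chain' (fun x y => y = x ∨ y = x + 1)

/-- The syllable number of a word: the number of maximal constant blocks. -/
def syl : List (ZMod 3) → ℕ
  | [] => 0
  | [_] => 1
  | x :: y :: t => (if x = y then 0 else 1) + syl (y :: t)

/-- The permutations underlying the band generators. -/
def perm3 (i : ZMod 3) : Equiv.Perm (Fin 3) :=
  if i = 0 then Equiv.swap 0 2 else if i = 1 then Equiv.swap 0 1 else Equiv.swap 1 2

lemma perm3_rel : ∀ i : ZMod 3,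
    perm3 (i + 1) * perm3 i * (perm3 (i + 2) * perm3 (i + 1))⁻¹ = 1 := by decide

/-- The homomorphism to the symmetric group on 3 letters (underlying permutation). -/
def permOf : B3 →* Equiv.Perm (Fin 3) :=
  PresentedGroup.toGroup (f := perm3) (by
    rintro r ⟨i, rfl⟩
    simp only [map_mul, map_inv, FreeGroup.lift_apply_of]
    exact perm3_rel i)

/-- The set of band generators and their inverses. -/
def genSet : Set B3 := Set.range a ∪ Set.range (fun i => (a i)⁻¹)

/-- The band-generator word length of a 3-braid. -/
noncomputable def wordLen (x : B3) : ℕ :=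
  sInf { n | ∃ s : List B3, s.length = n ∧ (∀ g ∈ s, g ∈ genSet) ∧ s.prod = x }

/-- The minimal band-generator word length in the conjugacy class. -/
noncomputable def minConjLen (x : B3) : ℕ :=
  sInf { n | ∃ y, IsConj x y ∧ wordLen y = n }

/-- `α` is a summit element with summit exponent `u` if `δ^{-u} * α` is positive and `u` is
the maximal such exponent over the conjugacy class. -/
def IsSummit (α : B3) (u : ℤ) : Prop :=
  δ ^ (-u) * α ∈ Pos ∧ ∀ β : B3, IsConj α β → ∀ v : ℤ, δ ^ (-v) * β ∈ Pos → v ≤ u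

lemma a_succ_mul_a (i : ZMod 3) : a (i + 1) * a i = δ := by
  have step (j : ZMod 3) : a (j + 1) * a j = a (j + 1 + 1) * a (j + 1) := by
    have hrel : (PresentedGroup.mk braidRels (FreeGroup.of (j + 1) * FreeGroup.of j *
        (FreeGroup.of (j + 2) * FreeGroup.of (j + 1))⁻¹)) = 1 :=
      (PresentedGroup.mk_eq_one_iff (rels := braidRels)).mpr
        (Subgroup.subset_normalClosure ⟨j, rfl⟩)
    rw [add_assoc, one_add_one_eq_two]
    exact mul_inv_eq_one.mp hrel
  fin_cases i
  · exact (step 0).trans rfl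
  · rfl
  · exact (step 2).trans ((step 0).trans rfl)

lemma a_mul_delta (i : ZMod 3) : a i * δ = δ * a (i + 1) := by
  have hi : i + 2 + 1 = i := by revert i; decide
  calc a i * δ = a (i + 2 + 1) * a (i + 2) * a (i + 1) := by
        rw [hi, mul_assoc, ← a_succ_mul_a (i + 1), add_assoc, one_add_one_eq_two]
    _ = δ * a (i + 1) := by rw [a_succ_mul_a]

lemma a_mul_delta_zpow (i : ZMod 3) (k : ℤ) : a i * δ ^ k = δ ^ k * a (i + k) := by
  induction k using Int.induction_on generalizing i with
  | zero => simp
  | succ k ih =>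
    rw [zpow_add_one, ← mul_assoc, ih, mul_assoc, a_mul_delta, ← mul_assoc]
    push_cast
    ring_nf
  | pred k ih =>
    refine mul_right_cancel (b := δ) ?_
    rw [mul_assoc, ← zpow_add_one, mul_assoc, a_mul_delta, ← mul_assoc, ← zpow_add_one,
      sub_add_cancel, ih]
    push_cast
    ring_nf

lemma tauPow_a (k : ℤ) (i : ZMod 3) : tauPow k (a i) = a (i + k) := by
  rw [tauPow, mul_assoc, a_mul_delta_zpow, zpow_neg, inv_mul_cancel_left]

lemma tauPow_mul (k : ℤ) (x y : B3) : tauPow k (x * y) = tauPow k x * tauPow k y := by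
  simp only [tauPow]
  group

lemma delta_zpow_mul_tauPow (k : ℤ) (x : B3) : δ ^ k * tauPow k x = x * δ ^ k := by
  simp only [tauPow]
  group

@[simp]
lemma wordProd_nil : wordProd [] = 1 := rfl

@[simp]
lemma wordProd_cons (i : ZMod 3) (l : List (ZMod 3)) : wordProd (i :: l) = a i * wordProd l :=
  List.prod_cons

lemma wordProd_append (l₁ l₂ : List (ZMod 3)) :
    wordProd (l₁ ++ l₂) = wordProd l₁ * wordProd l₂ := by
  simp [wordProd]

lemma tauPow_wordProd (k : ℤ) (l : List (ZMod 3)) :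
    tauPow k (wordProd l) = wordProd (l.map (· + (k : ZMod 3))) := by
  induction l with
  | nil => simp [tauPow]
  | cons i l ih => rw [wordProd_cons, tauPow_mul, tauPow_a, ih, List.map_cons, wordProd_cons]

lemma wordProd_mem_Pos (l : List (ZMod 3)) : wordProd l ∈ Pos :=
  Submonoid.list_prod_mem _ fun _ hx ↦ by
    obtain ⟨i, -, rfl⟩ := List.mem_map.mp hx
    exact Submonoid.subset_closure ⟨i, rfl⟩

lemma exists_eq_wordProd_of_mem_Pos {x : B3} (hx : x ∈ Pos) : ∃ l, x = wordProd l := by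
  rw [Pos, ← FreeMonoid.mrange_lift] at hx
  obtain ⟨m, rfl⟩ := hx
  exact ⟨m.toList, FreeMonoid.lift_apply _ _⟩

lemma isConj_delta_zpow_mul_wordProd_append (u : ℤ) (p q : List (ZMod 3)) :
    IsConj (δ ^ u * wordProd (p ++ q)) (δ ^ u * wordProd (q.map (· + (u : ZMod 3)) ++ p)) := by
  refine isConj_iff.mpr ⟨wordProd q, ?_⟩
  rw [wordProd_append, wordProd_append, ← tauPow_wordProd, tauPow]
  group

lemma isConj_delta_zpow_mul_wordProd_map (u : ℤ) (l : List (ZMod 3)) (m : ZMod 3) :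
    IsConj (δ ^ u * wordProd l) (δ ^ u * wordProd (l.map (· + m))) := by
  obtain ⟨k, rfl⟩ := ZMod.intCast_surjective m
  refine isConj_iff.mpr ⟨δ ^ (-k), ?_⟩
  rw [← tauPow_wordProd, tauPow]
  group

lemma wordProd_append_succ_cons (p q : List (ZMod 3)) (y : ZMod 3) :
    wordProd (p ++ (y + 1) :: y :: q) = δ * wordProd (p.map (· + 1) ++ q) := by
  have h := delta_zpow_mul_tauPow 1 (wordProd p)
  rw [zpow_one, tauPow_wordProd, Int.cast_one] at h
  rw [wordProd_append, wordProd_cons, wordProd_cons, ← mul_assoc (a (y + 1)), a_succ_mul_a,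
    ← mul_assoc, ← h, wordProd_append, mul_assoc]

namespace IsSummit

variable {α : B3} {u : ℤ}

lemma exists_eq_wordProd (hs : IsSummit α u) : ∃ w, α = δ ^ u * wordProd w := by
  obtain ⟨w, hw⟩ := exists_eq_wordProd_of_mem_Pos hs.1
  exact ⟨w, by rw [← hw]; group⟩

lemma not_isConj_delta_zpow_add_one_mul (hs : IsSummit α u) {x : B3} (hx : x ∈ Pos) :
    ¬ IsConj α (δ ^ (u + 1) * x) := fun h ↦ by
  have := hs.2 _ h (u + 1) (by rwa [← mul_assoc, ← zpow_add, neg_add_cancel, zpow_zero, one_mul])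
  omega

lemma ndWord_of_isConj (hs : IsSummit α u) {l : List (ZMod 3)}
    (h : IsConj α (δ ^ u * wordProd l)) : NDWord l := by
  refine List.isChain_iff_forall_rel_of_append_cons_cons.mpr fun x y p q hl ↦ ?_
  have : ∀ x y : ZMod 3, (y = x ∨ y = x + 1) ∨ x = y + 1 := by decide
  refine (this x y).resolve_right fun hxy ↦ hs.not_isConj_delta_zpow_add_one_mul
    (wordProd_mem_Pos (p.map (· + 1) ++ q)) ?_
  rwa [hl, hxy, wordProd_append_succ_cons, ← mul_assoc, ← zpow_add_one] at h

end IsSummit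

lemma permOf_a (i : ZMod 3) : permOf (a i) = perm3 i :=
  PresentedGroup.toGroup.of _

lemma permOf_delta : permOf δ = perm3 2 * perm3 1 := by
  rw [δ, map_mul, permOf_a, permOf_a]

lemma sign_permOf_wordProd (l : List (ZMod 3)) :
    Equiv.Perm.sign (permOf (wordProd l)) = (-1) ^ l.length := by
  have sign_perm3 : ∀ i, Equiv.Perm.sign (perm3 i) = -1 := by decide
  induction l with
  | nil => simp
  | cons i l ih =>
    rw [wordProd_cons, map_mul, map_mul, permOf_a, sign_perm3, ih, List.length_cons, pow_succ']

lemma even_length_of_isThreeCycle {u : ℤ} {w : List (ZMod 3)}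
    (h : (permOf (δ ^ u * wordProd w)).IsThreeCycle) : Even w.length := by
  have hsign := h.sign
  rw [map_mul, map_mul, map_zpow, map_zpow, permOf_delta, sign_permOf_wordProd,
    show Equiv.Perm.sign (perm3 2 * perm3 1) = 1 by decide, one_zpow, one_mul] at hsign
  exact (neg_one_pow_eq_one_iff_even (by decide)).mp hsign

lemma permOf_delta_zpow_eq_one {k : ℤ} (hk : 3 ∣ k) : permOf δ ^ k = 1 := by
  obtain ⟨m, rfl⟩ := hk
  rw [zpow_mul, permOf_delta, show (perm3 2 * perm3 1) ^ (3 : ℤ) = 1 by decide, one_zpow]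

def AscWord (l : List (ZMod 3)) : Prop :=
  l.IsChain (fun x y => y = x + 1)

lemma NDWord.ascWord_or_exists_eq_append_cons_cons {w : List (ZMod 3)} (hw : NDWord w) :
    AscWord w ∨ ∃ p c q, w = p ++ c :: c :: q := by
  by_contra! h
  obtain ⟨hasc, hpair⟩ := h
  refine hasc (List.isChain_iff_forall_rel_of_append_cons_cons.mpr fun x y p q hw' ↦ ?_)
  refine ((List.isChain_iff_forall_rel_of_append_cons_cons.mp hw) hw').resolve_left ?_
  rintro rfl
  exact hpair p _ q hw'

lemma AscWord.eq_add_length {x j : ZMod 3} {t : List (ZMod 3)} (h : AscWord (x :: (t ++ [j]))) :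
    j = x + (t.length + 1) := by
  induction t generalizing x with
  | nil => simpa [AscWord] using h
  | cons y t ih =>
    obtain ⟨rfl, h⟩ := List.isChain_cons_cons.mp h
    rw [ih h, List.length_cons]
    push_cast
    ring

lemma permOf_wordProd_of_ascWord {l : List (ZMod 3)} (h : AscWord l) {m : ℕ}
    (hl : l.length = 2 * m) : permOf (wordProd l) = permOf δ ^ (-(m : ℤ)) := by
  have pair : ∀ i, perm3 i * perm3 (i + 1) = (perm3 2 * perm3 1)⁻¹ := by decide
  induction m generalizing l with
  | zero => simp [List.length_eq_zero_iff.mp hl]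
  | succ m ih =>
    obtain ⟨x, y, t, rfl⟩ : ∃ x y t, l = x :: y :: t := by
      match l, hl with
      | x :: y :: t, _ => exact ⟨x, y, t, rfl⟩
    obtain ⟨rfl, h⟩ := List.isChain_cons_cons.mp h
    rw [wordProd_cons, wordProd_cons, map_mul, map_mul, permOf_a, permOf_a, ← mul_assoc, pair,
      ih (l := t) h.tail (by simp only [List.length_cons] at hl; omega), permOf_delta,
      Nat.cast_succ, neg_add_rev, zpow_add, zpow_neg_one]

lemma IsSummit.exists_isConj_append_cons_cons_of_ascWord {α : B3} {u : ℤ} (hs : IsSummit α u)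
    {w : List (ZMod 3)} (hα : α = δ ^ u * wordProd w) (hw : AscWord w) (hne : w ≠ [])
    (h3 : (permOf α).IsThreeCycle) : ∃ p c q, IsConj α (δ ^ u * wordProd (p ++ c :: c :: q)) := by
  subst hα
  obtain ⟨m, hm⟩ := even_length_of_isThreeCycle h3
  obtain ⟨x, r, rfl⟩ := List.exists_cons_of_ne_nil hne
  obtain rfl | ⟨t, j, rfl⟩ := r.eq_nil_or_concat'
  · simp only [List.length_singleton] at hm
    omega
  have hrot := isConj_delta_zpow_mul_wordProd_append u (x :: t) [j]
  rcases (List.isChain_cons_cons.mp (hs.ndWord_of_isConj hrot)).1 with hx | hx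
  · exact ⟨[], x, t, by simpa [hx] using hrot⟩
  · exfalso
    have hperm : permOf (δ ^ u * wordProd (x :: (t ++ [j]))) = permOf δ ^ (u - m) := by
      rw [map_mul, map_zpow, permOf_wordProd_of_ascWord hw (m := m) (by omega), ← zpow_add,
        sub_eq_add_neg]
    refine h3.isCycle.ne_one (hperm ▸ permOf_delta_zpow_eq_one ?_)
    have hj := hw.eq_add_length
    have hL : ((t.length + 2 : ℕ) : ZMod 3) = ((m + m : ℕ) : ZMod 3) := by
      simp only [List.length_cons, List.length_append] at hm
      rw [← hm]
      rfl
    refine (ZMod.intCast_zmod_eq_zero_iff_dvd _ 3).mp ?_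
    push_cast at hL ⊢
    have h30 : (3 : ZMod 3) = 0 := rfl
    linear_combination -(hx + hj + hL) - (m : ZMod 3) * h30

/-- Corollary 3.3: a summit element `α` closing to a knot, with `δ^{-u} α ≠ 1`, is conjugate to
`δ^u P a₁²` where `P a₁²` is a nondecreasing positive word. -/
theorem summit_conjugate_a1_squared (α : B3) (u : ℤ) (hs : IsSummit α u)
    (hnt : δ ^ (-u) * α ≠ 1) (h3 : (permOf α).IsThreeCycle) :
    ∃ w₀ : List (ZMod 3), NDWord (w₀ ++ [1, 1]) ∧
      IsConj α (δ ^ u * wordProd (w₀ ++ [1, 1])) := by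
  obtain ⟨w, hα⟩ := hs.exists_eq_wordProd
  have hne : w ≠ [] := by
    rintro rfl
    exact hnt (by rw [hα, wordProd_nil, mul_one, zpow_neg, inv_mul_cancel])
  have hw : IsConj α (δ ^ u * wordProd w) := hα ▸ IsConj.refl _
  obtain ⟨p, c, q, hpcq⟩ : ∃ p c q, IsConj α (δ ^ u * wordProd (p ++ c :: c :: q)) := by
    rcases (hs.ndWord_of_isConj hw).ascWord_or_exists_eq_append_cons_cons with
      hasc | ⟨p, c, q, rfl⟩
    · exact hs.exists_isConj_append_cons_cons_of_ascWord hα hasc hne h3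
    · exact ⟨p, c, q, hw⟩
  -- rotate `q` to the front, then rename the letters so that `c` becomes `1`
  set w₀ := (q.map (· + (u : ZMod 3)) ++ p).map (· + (1 - c))
  have hconj : IsConj α (δ ^ u * wordProd (w₀ ++ [1, 1])) := by
    rw [← List.singleton_append, ← List.singleton_append (l := q), ← List.append_assoc,
      ← List.append_assoc] at hpcq
    simpa [w₀] using (hpcq.trans (isConj_delta_zpow_mul_wordProd_append u _ q)).trans
      (isConj_delta_zpow_mul_wordProd_map u _ (1 - c))
  exact ⟨w₀, hs.ndWord_of_isConj hconj, hconj⟩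

end Braid
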